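/- arXiv:2006.12310 — 2 statements merged into one kernel-verified Lean document; each statement's English description precedes it below -/
import Mathlib

section
/- Let g, h ∈ R[λ] and let n be a positive integer such that g ≡ h^n mod (p,q−1)R[λ] and h^n ∉ (p,q−1)R[λ]. Then the image of g in R⟨λ,1/h⟩ is a unit, the image of h in R⟨λ,1/g⟩ is a unit, and the induced continuous R[λ]-algebra homomorphisms R⟨λ,1/g⟩ → R⟨λ,1/h⟩ and R⟨λ,1/h⟩ → R⟨λ,1/g⟩ are mutually inverse ring isomorphisms; in particular R⟨λ,1/g⟩ ≅ R⟨λ,1/h⟩. -/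
/- Setting (following Dwork-type q-congruences / q-hypergeometric papers):
`p` is an odd prime, `R = ℤ_p[[q−1]]` is implemented as `PowerSeries ℤ_[p]`, the power-series
variable `PowerSeries.X` standing for `q − 1`. -/

noncomputable section
open PowerSeries
namespace QDwork

variable (p : ℕ) [Fact p.Prime]

/-- `R = ℤ_p[[q−1]]`. -/
abbrev R : Type := PowerSeries ℤ_[p]

/-- `q = 1 + (q−1) ∈ R`. -/
def qq : R p := 1 + PowerSeries.X

/-- The localization `R[λ][1/g]`. -/
abbrev LocA (g : Polynomial (R p)) : Type := Localization.Away g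

/-- The ideal `(p, q−1)` of `R[λ][1/g]`. -/
def JLoc (g : Polynomial (R p)) : Ideal (LocA p g) :=
  Ideal.span {algebraMap (Polynomial (R p)) (LocA p g) (Polynomial.C (p : R p)),
    algebraMap (Polynomial (R p)) (LocA p g) (Polynomial.C (qq p - 1))}

/-- `R⟨λ, 1/g⟩`: the `(p,q−1)`-adic completion of `R[λ][1/g]`. -/
abbrev Tcomp (g : Polynomial (R p)) : Type := AdicCompletion (JLoc p g) (LocA p g)

/-- The canonical (continuous) ring homomorphism `R[λ] → R⟨λ,1/g⟩`. -/
def ιT (g : Polynomial (R p)) : Polynomial (R p) →+* Tcomp p g :=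
  (algebraMap (LocA p g) (Tcomp p g)).comp (algebraMap (Polynomial (R p)) (LocA p g))

/-- The ideal `(p,q−1)` of `R⟨λ,1/g⟩`. -/
def JT (g : Polynomial (R p)) : Ideal (Tcomp p g) :=
  Ideal.span {ιT p g (Polynomial.C (p : R p)), ιT p g (Polynomial.C (qq p - 1))}

end QDwork

/-! Elements of `(p, q−1)` lie in the Jacobson radical of an adically complete ring, and
`g ≡ h^n` modulo `(p, q−1)`; hence `g` is a unit in `R⟨λ,1/h⟩`, and `h^n`, so `h`, is a unit
in `R⟨λ,1/g⟩`. The universal property of localization gives maps `R[λ][1/g] → R⟨λ,1/h⟩` and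
back which are continuous, so they extend level by level to the completions. Both composites
are the identity on every `R[λ][1/g] / (p, q−1)^k`, as they fix `R[λ]` and `1/g` is then forced. -/

namespace AdicCompletion

variable {A B : Type*} [CommRing A] [CommRing B] {I : Ideal A} {K : Ideal B}

theorem isUnit_algebraMap_iff_of_sub_mem (hI : I.FG) {a b : A} (hab : a - b ∈ I) :
    IsUnit (algebraMap A (AdicCompletion I A) a) ↔
      IsUnit (algebraMap A (AdicCompletion I A) b) := by
  have := isAdicComplete_self I hI
  have := isLocalHom_of_le_jacobson_bot _
    (IsAdicComplete.le_jacobson_bot (I.map (algebraMap A (AdicCompletion I A))))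
  have hmk : Ideal.Quotient.mk (I.map (algebraMap A (AdicCompletion I A))) (algebraMap A _ a) =
      Ideal.Quotient.mk _ (algebraMap A _ b) := by
    rw [Ideal.Quotient.eq, ← map_sub]
    exact Ideal.mem_map_of_mem _ hab
  rw [← isUnit_map_iff (Ideal.Quotient.mk (I.map (algebraMap A (AdicCompletion I A)))), hmk,
    isUnit_map_iff]

theorem factorPow_evalₐ {m n : ℕ} (hmn : m ≤ n) (x : AdicCompletion I A) :
    Ideal.Quotient.factorPow I hmn (evalₐ I n x) = evalₐ I m x := by
  obtain ⟨s, rfl⟩ := mk_surjective I A x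
  rw [evalₐ_mk, evalₐ_mk, Ideal.Quotient.factor_mk, Ideal.mk_eq_mk I hmn]

theorem pow_le_ker_evalₐ_comp (φ : A →+* AdicCompletion K B)
    (hφ : I.map φ ≤ K.map (algebraMap B (AdicCompletion K B))) (n : ℕ) :
    I ^ n ≤ RingHom.ker ((evalₐ K n : AdicCompletion K B →+* B ⧸ K ^ n).comp φ) := by
  have hmk : (evalₐ K n : AdicCompletion K B →+* B ⧸ K ^ n).comp (algebraMap B _) =
      Ideal.Quotient.mk (K ^ n) :=
    RingHom.ext (evalₐ_of K n)
  rw [RingHom.ker, ← Ideal.map_le_iff_le_comap, ← Ideal.map_map, Ideal.map_pow]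
  calc ((I.map φ) ^ n).map (evalₐ K n : AdicCompletion K B →+* B ⧸ K ^ n)
      ≤ ((K.map (algebraMap B _)) ^ n).map (evalₐ K n : AdicCompletion K B →+* B ⧸ K ^ n) :=
        Ideal.map_mono (Ideal.pow_right_mono hφ n)
    _ = ⊥ := by rw [← Ideal.map_pow, Ideal.map_map, hmk, Ideal.map_quotient_self]

section extendRingHom

variable (φ : A →+* AdicCompletion K B) (hφ : I.map φ ≤ K.map (algebraMap B (AdicCompletion K B)))

def extendRingHomLevel (n : ℕ) : AdicCompletion I A →+* B ⧸ K ^ n :=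
  (Ideal.Quotient.lift (I ^ n) ((evalₐ K n : AdicCompletion K B →+* B ⧸ K ^ n).comp φ)
    (fun _ ha ↦ RingHom.mem_ker.1 (pow_le_ker_evalₐ_comp φ hφ n ha))).comp
      (evalₐ I n : AdicCompletion I A →+* A ⧸ I ^ n)

theorem extendRingHomLevel_of_evalₐ_eq {n : ℕ} {x : AdicCompletion I A} {a : A}
    (h : evalₐ I n x = Ideal.Quotient.mk (I ^ n) a) :
    extendRingHomLevel φ hφ n x = evalₐ K n (φ a) := by
  rw [extendRingHomLevel, RingHom.comp_apply, RingHom.coe_coe, h, Ideal.Quotient.lift_mk]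
  rfl

theorem factorPow_comp_extendRingHomLevel {m n : ℕ} (hmn : m ≤ n) :
    (Ideal.Quotient.factorPow K hmn).comp (extendRingHomLevel φ hφ n) =
      extendRingHomLevel φ hφ m :=
  RingHom.ext fun x ↦ by
    obtain ⟨a, ha⟩ := Ideal.Quotient.mk_surjective (evalₐ I n x)
    have ha' : evalₐ I m x = Ideal.Quotient.mk (I ^ m) a := by
      rw [← factorPow_evalₐ hmn x, ← ha, Ideal.Quotient.factor_mk]
    rw [RingHom.comp_apply, extendRingHomLevel_of_evalₐ_eq φ hφ ha.symm,
      extendRingHomLevel_of_evalₐ_eq φ hφ ha', factorPow_evalₐ]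

def extendRingHom : AdicCompletion I A →+* AdicCompletion K B :=
  liftRingHom K (extendRingHomLevel φ hφ) (factorPow_comp_extendRingHomLevel φ hφ)

theorem evalₐ_extendRingHom_congr {n : ℕ} {x y : AdicCompletion I A}
    (h : evalₐ I n x = evalₐ I n y) :
    evalₐ K n (extendRingHom φ hφ x) = evalₐ K n (extendRingHom φ hφ y) := by
  simp only [extendRingHom, evalₐ_liftRingHom, extendRingHomLevel, RingHom.comp_apply,
    RingHom.coe_coe, h]

theorem extendRingHom_algebraMap (a : A) :
    extendRingHom φ hφ (algebraMap A (AdicCompletion I A) a) = φ a :=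
  ext_evalₐ fun n ↦ by
    rw [extendRingHom, evalₐ_liftRingHom]
    exact extendRingHomLevel_of_evalₐ_eq φ hφ (evalₐ_of I n a)

theorem extendRingHom_extendRingHom (ψ : B →+* AdicCompletion I A)
    (hψ : K.map ψ ≤ I.map (algebraMap A (AdicCompletion I A)))
    (hψφ : ∀ a, extendRingHom ψ hψ (φ a) = algebraMap A (AdicCompletion I A) a)
    (x : AdicCompletion I A) : extendRingHom ψ hψ (extendRingHom φ hφ x) = x :=
  ext_evalₐ fun n ↦ by
    obtain ⟨a, ha⟩ := Ideal.Quotient.mk_surjective (evalₐ I n x)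
    have hxa : evalₐ I n x = evalₐ I n (algebraMap A _ a) := ha.symm.trans (evalₐ_of I n a).symm
    calc evalₐ I n (extendRingHom ψ hψ (extendRingHom φ hφ x))
        = evalₐ I n (extendRingHom ψ hψ (extendRingHom φ hφ (algebraMap A _ a))) :=
          evalₐ_extendRingHom_congr ψ hψ (evalₐ_extendRingHom_congr φ hφ hxa)
      _ = evalₐ I n x := by rw [extendRingHom_algebraMap, hψφ, hxa]

end extendRingHom

end AdicCompletion

theorem Ideal.apply_mem_span_image_pow {R S : Type*} [CommSemiring R] [CommSemiring S]
    (f : R →+* S) {s : Set R} {k : ℕ} {x : R} (hx : x ∈ Ideal.span s ^ k) :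
    f x ∈ Ideal.span (f '' s) ^ k := by
  simpa only [Ideal.map_pow, Ideal.map_span] using Ideal.mem_map_of_mem f hx

namespace Localization.Away

open AdicCompletion

variable {P : Type*} [CommRing P] {J : Ideal P}

theorem isUnit_algebraMap_completion_iff_of_sub_mem (hJ : J.FG) {f : P}
    {I : Ideal (Away f)} (hI : I = J.map (algebraMap P (Away f))) {a b : P} (hab : a - b ∈ J) :
    IsUnit (algebraMap P (AdicCompletion I (Away f)) a) ↔
      IsUnit (algebraMap P (AdicCompletion I (Away f)) b) := by
  subst hI
  simp only [IsScalarTower.algebraMap_apply P (Away f) (AdicCompletion _ (Away f))]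
  exact isUnit_algebraMap_iff_of_sub_mem (hJ.map _) (map_sub (algebraMap P (Away f)) a b ▸
    Ideal.mem_map_of_mem _ hab)

theorem isUnit_algebraMap_completion_self {f : P} (I : Ideal (Away f)) :
    IsUnit (algebraMap P (AdicCompletion I (Away f)) f) := by
  rw [IsScalarTower.algebraMap_apply P (Away f)]
  exact (IsLocalization.Away.algebraMap_isUnit f).map _

variable {f₁ f₂ : P} {I₁ : Ideal (Away f₁)} {I₂ : Ideal (Away f₂)}

theorem map_awayLift_le (hI₁ : I₁ = J.map (algebraMap P (Away f₁)))
    (hI₂ : I₂ = J.map (algebraMap P (Away f₂)))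
    (hu : IsUnit (algebraMap P (AdicCompletion I₂ (Away f₂)) f₁)) :
    I₁.map (awayLift (algebraMap P (AdicCompletion I₂ (Away f₂))) f₁ hu) ≤
      I₂.map (algebraMap (Away f₂) (AdicCompletion I₂ (Away f₂))) := by
  subst hI₁ hI₂
  rw [Ideal.map_map, Ideal.map_map, awayLift, IsLocalization.Away.lift_comp,
    ← IsScalarTower.algebraMap_eq]

/-- `R⟨λ,1/f₁⟩ → R⟨λ,1/f₂⟩`, with `R[λ]` and `(p, q−1)` generalized to `P` and `J`. -/
def completionHom (hI₁ : I₁ = J.map (algebraMap P (Away f₁)))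
    (hI₂ : I₂ = J.map (algebraMap P (Away f₂)))
    (hu : IsUnit (algebraMap P (AdicCompletion I₂ (Away f₂)) f₁)) :
    AdicCompletion I₁ (Away f₁) →+* AdicCompletion I₂ (Away f₂) :=
  extendRingHom _ (map_awayLift_le hI₁ hI₂ hu)

variable (hI₁ : I₁ = J.map (algebraMap P (Away f₁))) (hI₂ : I₂ = J.map (algebraMap P (Away f₂)))
  (hu₁ : IsUnit (algebraMap P (AdicCompletion I₂ (Away f₂)) f₁))
  (hu₂ : IsUnit (algebraMap P (AdicCompletion I₁ (Away f₁)) f₂))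

theorem completionHom_algebraMap (x : P) :
    completionHom hI₁ hI₂ hu₁ (algebraMap P _ x) = algebraMap P _ x := by
  rw [IsScalarTower.algebraMap_apply P (Away f₁), completionHom, extendRingHom_algebraMap,
    awayLift, IsLocalization.Away.lift_eq]

theorem completionHom_completionHom (x : AdicCompletion I₁ (Away f₁)) :
    completionHom hI₂ hI₁ hu₂ (completionHom hI₁ hI₂ hu₁ x) = x := by
  have hcomp : (completionHom hI₂ hI₁ hu₂).comp (awayLift (algebraMap P _) f₁ hu₁) =
      algebraMap (Away f₁) (AdicCompletion I₁ (Away f₁)) :=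
    IsLocalization.ringHom_ext (Submonoid.powers f₁) <| RingHom.ext fun y ↦ by
      simp only [RingHom.comp_apply, awayLift, IsLocalization.Away.lift_eq,
        completionHom_algebraMap, ← IsScalarTower.algebraMap_apply]
  exact extendRingHom_extendRingHom _ _ _ _ (RingHom.congr_fun hcomp) x

def completionAlgEquiv : AdicCompletion I₁ (Away f₁) ≃ₐ[P] AdicCompletion I₂ (Away f₂) :=
  AlgEquiv.ofRingEquiv (f := RingEquiv.ofRingHom (completionHom hI₁ hI₂ hu₁)
      (completionHom hI₂ hI₁ hu₂)
      (RingHom.ext (completionHom_completionHom hI₂ hI₁ hu₂ hu₁))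
      (RingHom.ext (completionHom_completionHom hI₁ hI₂ hu₁ hu₂)))
    (completionHom_algebraMap hI₁ hI₂ hu₁)

end Localization.Away

namespace QDwork

variable (p : ℕ) [Fact p.Prime]

theorem ιT_eq_algebraMap (g : Polynomial (R p)) :
    ιT p g = algebraMap (Polynomial (R p)) (Tcomp p g) :=
  (IsScalarTower.algebraMap_eq _ _ _).symm

theorem apply_mem_JT_pow {f₁ f₂ : Polynomial (R p)}
    (e : Tcomp p f₁ ≃ₐ[Polynomial (R p)] Tcomp p f₂) {k : ℕ} {t : Tcomp p f₁}
    (ht : t ∈ JT p f₁ ^ k) : e t ∈ JT p f₂ ^ k := by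
  simpa [JT, ιT_eq_algebraMap, Set.image_pair] using
    Ideal.apply_mem_span_image_pow (e : Tcomp p f₁ →+* Tcomp p f₂) ht

/-- Continuity is expressed by preservation of the `(p,q−1)`-adic filtrations. -/
theorem completed_localizations_isomorphic
    (g h : Polynomial (R p)) (n : ℕ) (hn : 0 < n)
    (hcong : g - h ^ n ∈ (Ideal.span {Polynomial.C (p : R p), Polynomial.C (qq p - 1)} :
      Ideal (Polynomial (R p)))) :
    IsUnit (ιT p h g) ∧ IsUnit (ιT p g h) ∧
    ∃ e : Tcomp p g ≃+* Tcomp p h,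
      (∀ x : Polynomial (R p), e (ιT p g x) = ιT p h x) ∧
      (∀ (k : ℕ) (t : Tcomp p g), t ∈ JT p g ^ k → e t ∈ JT p h ^ k) ∧
      (∀ (k : ℕ) (t : Tcomp p h), t ∈ JT p h ^ k → e.symm t ∈ JT p g ^ k) := by
  set J : Ideal (Polynomial (R p)) := Ideal.span {Polynomial.C (p : R p), Polynomial.C (qq p - 1)}
  have hJ : J.FG := Submodule.fg_span (Set.toFinite _)
  have hJLoc (f : Polynomial (R p)) : JLoc p f = J.map (algebraMap _ (LocA p f)) := by
    rw [Ideal.map_span, Set.image_pair]; rfl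
  simp only [ιT_eq_algebraMap]
  have hug : IsUnit (algebraMap _ (Tcomp p h) g) :=
    (Localization.Away.isUnit_algebraMap_completion_iff_of_sub_mem hJ (hJLoc h) hcong).2
      (map_pow (algebraMap _ (Tcomp p h)) h n ▸
        (Localization.Away.isUnit_algebraMap_completion_self _).pow n)
  have huh : IsUnit (algebraMap _ (Tcomp p g) h) :=
    (isUnit_pow_iff hn.ne').1 (map_pow (algebraMap _ (Tcomp p g)) h n ▸
      (Localization.Away.isUnit_algebraMap_completion_iff_of_sub_mem hJ (hJLoc g) hcong).1
        (Localization.Away.isUnit_algebraMap_completion_self _))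
  let e := Localization.Away.completionAlgEquiv (hJLoc g) (hJLoc h) hug huh
  exact ⟨hug, huh, e.toRingEquiv, e.commutes, fun _ _ ↦ apply_mem_JT_pow p e,
    fun _ _ ↦ apply_mem_JT_pow p e.symm⟩

end QDwork
end
end

section
/- The power series F := Σ_{n≥0} a_n λ^n ∈ Q[[λ]] satisfies the q-hypergeometric equation: L[F] = qλ(1−qλ)·d_q²F + (1−αλ)·d_qF − [1/2]_q²·F = 0. -/
/- Setting (following Dwork-type q-congruences / q-hypergeometric papers):
`p` is an odd prime, `R = ℤ_p[[q−1]]` is implemented as `PowerSeries ℤ_[p]`, the power-series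
variable `PowerSeries.X` standing for `q − 1`. -/

noncomputable section
open PowerSeries
namespace QDwork

variable (p : ℕ) [Fact p.Prime]

/-- `q^a = Σ_{i≥0} binom(a,i)(q−1)^i ∈ R` for `a ∈ ℤ_p`, using the p-adically interpolated
binomial coefficients `Ring.choose` (`ℤ_p` is a binomial ring). -/
def qpow (a : ℤ_[p]) : R p := PowerSeries.mk fun i => Ring.choose a i

/-- The q-number `[a]_q = (q^a−1)/(q−1) = Σ_{i≥1} binom(a,i)(q−1)^{i−1} ∈ R` for `a ∈ ℤ_p`. -/
def qnum (a : ℤ_[p]) : R p := PowerSeries.mk fun i => Ring.choose a (i + 1)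

/-- The q-number `[n]_q = 1 + q + ⋯ + q^{n−1} ∈ R` of a natural number `n`. -/
def qnat (n : ℕ) : R p := ∑ i ∈ Finset.range n, qq p ^ i

/-- `1/2 ∈ ℤ_p` (recall `p` is odd, so `2` is a unit of `ℤ_p`). -/
def half : ℤ_[p] := Ring.inverse 2

/-- The q-derivative `d_q = (γ−1)/((q−1)λ)` on `A[[λ]]`, for a commutative ring `A` with a
distinguished element `q`; it is given on coefficients by `d_q(Σ aₙλⁿ) = Σ [n]_q aₙ λ^{n−1}`,
and is characterized by `dq_spec` below. -/
def dq {A : Type} [CommRing A] (q : A) (f : PowerSeries A) : PowerSeries A :=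
  PowerSeries.mk fun n => (∑ i ∈ Finset.range (n + 1), q ^ i) * PowerSeries.coeff (n + 1) f

/-- `d_q` is indeed `(γ−1)/((q−1)λ)`, where `γ(f)(λ) = f(qλ)` is `PowerSeries.rescale q`:
we have `(q−1)·λ·(d_q f) = γ(f) − f`. -/
theorem dq_spec {A : Type} [CommRing A] (q : A) (f : PowerSeries A) :
    PowerSeries.C (q - 1) * PowerSeries.X * dq q f = PowerSeries.rescale q f - f := by
  ext n
  rw [mul_comm (PowerSeries.C (q - 1)) PowerSeries.X, mul_assoc]
  rcases n with _ | n
  · have h0 := PowerSeries.coeff_rescale f q 0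
    simp only [pow_zero, one_mul, PowerSeries.coeff_zero_eq_constantCoeff] at h0
    simp only [PowerSeries.coeff_zero_eq_constantCoeff, map_mul, map_sub, constantCoeff_X,
      zero_mul, h0, sub_self]
  · rw [PowerSeries.coeff_succ_X_mul, PowerSeries.coeff_C_mul, dq, PowerSeries.coeff_mk,
      map_sub, PowerSeries.coeff_rescale]
    rw [← mul_assoc, mul_comm (q - 1), geom_sum_mul, sub_one_mul]

/-- `Q = Frac(R)`. -/
abbrev Q : Type := FractionRing (R p)

/-- The canonical injection `R → Q`. -/
def ι : R p →+* Q p := algebraMap (R p) (Q p)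

/-- `q ∈ Q`. -/
def qQ : Q p := ι p (qq p)

/-- `[a]_q` viewed in `Q`, for `a ∈ ℤ_p`. -/
def qnumQ (a : ℤ_[p]) : Q p := ι p (qnum p a)

/-- `[n]_q` viewed in `Q`, for a natural number `n`. -/
def qnatQ (n : ℕ) : Q p := ι p (qnat p n)

/-- `a_n = ∏_{i=0}^{n−1} ([i+1/2]_q/[i+1]_q)² ∈ Q`, with `a_0 = 1`. -/
def aCoef (n : ℕ) : Q p :=
  ∏ i ∈ Finset.range n, (qnumQ p ((i : ℤ_[p]) + half p) / qnumQ p ((i : ℤ_[p]) + 1)) ^ 2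

/-- `F = Σ_{n≥0} a_n λ^n ∈ Q[[λ]]`. -/
def Fq : PowerSeries (Q p) := PowerSeries.mk fun n => aCoef p n

/-- `α = 1 + [2]_q − 2[1/2]_q ∈ Q`. -/
def alphaQ : Q p := 1 + qnumQ p 2 - 2 * qnumQ p (half p)

/-- The q-hypergeometric operator
`L[f] = qλ(1−qλ)·d_q²f + (1−αλ)·d_qf − [1/2]_q²·f` on `Q[[λ]]`. -/
def Lq (f : PowerSeries (Q p)) : PowerSeries (Q p) :=
  PowerSeries.C (qQ p) * PowerSeries.X *
      (1 - PowerSeries.C (qQ p) * PowerSeries.X) * dq (qQ p) (dq (qQ p) f) +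
    (1 - PowerSeries.C (alphaQ p) * PowerSeries.X) * dq (qQ p) f -
    PowerSeries.C (qnumQ p (half p) ^ 2) * f


/-! Comparing coefficients of `λⁿ`, the operator `L = L_{q,α,β}` sends `Σ cₙλⁿ` to
`Σ ([n+1]² cₙ₊₁ − (q[n]([n]−1) + α[n] + β) cₙ) λⁿ`, so `L[f] = 0` is a two-term recurrence.
For the parameters of the theorem the bracket is a perfect square, `[n + 1/2]²`: write
`[n + 1/2] = [n] + qⁿ[1/2]` and use `q^{1/2} · q^{1/2} = q`, i.e. `2[1/2] + (q−1)[1/2]² = 1`.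
The coefficients `aₙ` are built to satisfy exactly `[n+1]² aₙ₊₁ = [n + 1/2]² aₙ`. -/

section QCalculus

variable {A : Type} [CommRing A]

def qInt (q : A) (n : ℕ) : A := ∑ i ∈ Finset.range n, q ^ i

@[simp]
lemma qInt_zero (q : A) : qInt q 0 = 0 := by simp [qInt]

lemma qInt_succ (q : A) (n : ℕ) : qInt q (n + 1) = 1 + q * qInt q n := by
  rw [qInt, qInt, geom_sum_succ, add_comm]

lemma pow_eq_one_add_sub_one_mul_qInt (q : A) (n : ℕ) : q ^ n = 1 + (q - 1) * qInt q n := by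
  rw [qInt, mul_geom_sum]; ring

lemma coeff_dq (q : A) (f : PowerSeries A) (n : ℕ) :
    coeff n (dq q f) = qInt q (n + 1) * coeff (n + 1) f := by
  rw [dq, coeff_mk, qInt]

lemma coeff_X_mul_dq (q : A) (f : PowerSeries A) (n : ℕ) :
    coeff n (X * dq q f) = qInt q n * coeff n f := by
  rcases n with _ | n
  · simp
  · rw [coeff_succ_X_mul, coeff_dq]

lemma coeff_X_mul_dq_dq (q : A) (f : PowerSeries A) (n : ℕ) :
    coeff n (X * dq q (dq q f)) = qInt q n * qInt q (n + 1) * coeff (n + 1) f := by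
  rw [coeff_X_mul_dq, coeff_dq, mul_assoc]

lemma coeff_C_sq_mul_X_sq_mul_dq_dq (q : A) (f : PowerSeries A) (n : ℕ) :
    coeff n (C q ^ 2 * X ^ 2 * dq q (dq q f)) = q * qInt q n * (qInt q n - 1) * coeff n f := by
  rcases n with _ | n
  · simp
  · rw [← map_pow, mul_assoc, coeff_C_mul, pow_two (X : PowerSeries A), mul_assoc,
      coeff_succ_X_mul, coeff_X_mul_dq_dq, qInt_succ]
    ring

def qHypergeometricOp (q α β : A) (f : PowerSeries A) : PowerSeries A :=
  C q * X * (1 - C q * X) * dq q (dq q f) + (1 - C α * X) * dq q f - C β * f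

lemma coeff_qHypergeometricOp (q α β : A) (f : PowerSeries A) (n : ℕ) :
    coeff n (qHypergeometricOp q α β f) = qInt q (n + 1) ^ 2 * coeff (n + 1) f -
      (q * qInt q n * (qInt q n - 1) + α * qInt q n + β) * coeff n f := by
  have hsplit : qHypergeometricOp q α β f =
      C q * (X * dq q (dq q f)) - C q ^ 2 * X ^ 2 * dq q (dq q f) + dq q f
        - C α * (X * dq q f) - C β * f := by
    rw [qHypergeometricOp]; ring
  rw [hsplit, map_sub, map_sub, map_add, map_sub, coeff_C_mul, coeff_C_mul, coeff_C_mul,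
    coeff_X_mul_dq_dq, coeff_C_sq_mul_X_sq_mul_dq_dq, coeff_X_mul_dq, coeff_dq, qInt_succ]
  ring

lemma qHypergeometricOp_eq_zero_of_recurrence {q α β : A} {f : PowerSeries A}
    (h : ∀ n, qInt q (n + 1) ^ 2 * coeff (n + 1) f =
      (q * qInt q n * (qInt q n - 1) + α * qInt q n + β) * coeff n f) :
    qHypergeometricOp q α β f = 0 := by
  ext n
  rw [coeff_qHypergeometricOp, h, sub_self, map_zero]

/-- Here `h` plays the role of `[1/2]_q`: the hypothesis says `(1 + (q−1)h)² = q`. -/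
lemma qHypergeometric_bracket_eq_sq {q h : A} (hh : 2 * h + (q - 1) * h ^ 2 = 1) (n : ℕ) :
    q * qInt q n * (qInt q n - 1) + (2 + q - 2 * h) * qInt q n + h ^ 2
      = (qInt q n + q ^ n * h) ^ 2 := by
  rw [pow_eq_one_add_sub_one_mul_qInt q n]
  linear_combination (-(q - 1) * qInt q n ^ 2 - 2 * qInt q n) * hh

end QCalculus

lemma qq_sub_one : qq p - 1 = X := by
  rw [qq]; ring

lemma qpow_eq_binomialSeries (a : ℤ_[p]) : qpow p a = binomialSeries ℤ_[p] a := by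
  ext n
  rw [qpow, coeff_mk, binomialSeries_coeff, smul_eq_mul, mul_one]

lemma qpow_eq_one_add_X_mul_qnum (a : ℤ_[p]) : qpow p a = 1 + X * qnum p a := by
  ext n
  rcases n with _ | n
  · simp [qpow, qnum]
  · simp [qpow, qnum, coeff_succ_X_mul]

lemma qpow_add (a b : ℤ_[p]) : qpow p (a + b) = qpow p a * qpow p b := by
  simp only [qpow_eq_binomialSeries, binomialSeries_add]

lemma qnum_add (a b : ℤ_[p]) : qnum p (a + b) = qnum p a + qpow p a * qnum p b := by
  refine mul_left_cancel₀ (X_ne_zero (R := ℤ_[p])) ?_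
  have hadd := qpow_add p a b
  simp only [qpow_eq_one_add_X_mul_qnum] at hadd ⊢
  linear_combination hadd

lemma qpow_natCast (n : ℕ) : qpow p n = qq p ^ n := by
  rw [qpow_eq_binomialSeries, binomialSeries_nat, qq]

lemma qnum_natCast (n : ℕ) : qnum p n = qInt (qq p) n := by
  refine mul_left_cancel₀ (X_ne_zero (R := ℤ_[p])) ?_
  have h := pow_eq_one_add_sub_one_mul_qInt (qq p) n
  rw [← qpow_natCast, qpow_eq_one_add_X_mul_qnum] at h
  linear_combination h + qInt (qq p) n * qq_sub_one p

lemma two_mul_qnum_half_add_X_mul_sq (hp : p ≠ 2) :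
    2 * qnum p (half p) + X * qnum p (half p) ^ 2 = 1 := by
  have htwo : IsUnit (2 : ℤ_[p]) := by
    rw [PadicInt.isUnit_iff, ← Nat.cast_ofNat, PadicInt.norm_natCast_eq_one_iff,
      Nat.coprime_two_right]
    exact (Fact.out : p.Prime).odd_of_ne_two hp
  have hsq : qpow p (half p) * qpow p (half p) = qq p := by
    rw [← qpow_add, ← two_mul, half, Ring.mul_inverse_cancel _ htwo]
    simpa using qpow_natCast p 1
  rw [qpow_eq_one_add_X_mul_qnum, qq] at hsq
  refine mul_left_cancel₀ (X_ne_zero (R := ℤ_[p])) ?_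
  linear_combination hsq

lemma ι_X : ι p X = qQ p - 1 := by
  rw [← qq_sub_one, map_sub, map_one, qQ]

lemma ι_qInt (n : ℕ) : ι p (qInt (qq p) n) = qInt (qQ p) n := by
  simp only [qInt, map_sum, map_pow, qQ]

lemma qnumQ_natCast (n : ℕ) : qnumQ p n = qInt (qQ p) n := by
  rw [qnumQ, qnum_natCast, ι_qInt]

lemma qnumQ_natCast_add_half (n : ℕ) :
    qnumQ p (n + half p) = qInt (qQ p) n + qQ p ^ n * qnumQ p (half p) := by
  rw [qnumQ, qnum_add, map_add, map_mul, qpow_natCast, qnum_natCast, ι_qInt, map_pow, ← qQ,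
    ← qnumQ]

lemma two_mul_qnumQ_half_add_sub_one_mul_sq (hp : p ≠ 2) :
    2 * qnumQ p (half p) + (qQ p - 1) * qnumQ p (half p) ^ 2 = 1 := by
  have h := congrArg (ι p) (two_mul_qnum_half_add_X_mul_sq p hp)
  rwa [map_add, map_mul, map_mul, map_pow, map_ofNat, map_one, ι_X, ← qnumQ] at h

lemma alphaQ_eq : alphaQ p = 2 + qQ p - 2 * qnumQ p (half p) := by
  rw [alphaQ, ← Nat.cast_ofNat, qnumQ_natCast, qInt_succ, qInt_succ, qInt_zero]
  ring

lemma qInt_qQ_succ_ne_zero (n : ℕ) : qInt (qQ p) (n + 1) ≠ 0 := by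
  rw [← ι_qInt, ι, Ne, IsFractionRing.to_map_eq_zero_iff]
  intro h
  have hc := congrArg constantCoeff h
  simp only [qInt, qq, map_sum, map_pow, map_add, map_one, constantCoeff_X, add_zero, one_pow,
    Finset.sum_const, Finset.card_range, nsmul_eq_mul, mul_one, map_zero] at hc
  exact Nat.cast_ne_zero.mpr n.succ_ne_zero hc

lemma aCoef_succ (n : ℕ) :
    qInt (qQ p) (n + 1) ^ 2 * aCoef p (n + 1) = qnumQ p (n + half p) ^ 2 * aCoef p n := by
  rw [aCoef, Finset.prod_range_succ, ← aCoef, ← Nat.cast_add_one, qnumQ_natCast, div_pow,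
    mul_comm (aCoef p n), ← mul_assoc, mul_div_cancel₀ _ (pow_ne_zero 2 (qInt_qQ_succ_ne_zero p n))]

/-- `F = Σ_{n≥0} a_n λ^n` satisfies the q-hypergeometric equation `L[F] = 0`. -/
theorem qhypergeometric_F (hp : p ≠ 2) : Lq p (Fq p) = 0 := by
  change qHypergeometricOp (qQ p) (alphaQ p) (qnumQ p (half p) ^ 2) (Fq p) = 0
  refine qHypergeometricOp_eq_zero_of_recurrence fun n => ?_
  rw [Fq, coeff_mk, coeff_mk, aCoef_succ, alphaQ_eq, qHypergeometric_bracket_eq_sq (two_mul_qnumQ_half_add_sub_one_mul_sq p hp),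
    qnumQ_natCast_add_half]

end QDwork
end
end
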